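/- Fix a positive integer k and a real number ε > 0. Let w = [x_1^2, x_2, …, x_k]. There exists a positive integer n = n(k, ε), depending only on k and ε, such that for every finite group G satisfying P_{G,w}(g) ≥ ε for some g ∈ G, the subgroup G(S_n) (the intersection of the kernels of all homomorphisms from G to the symmetric group S_n) is nilpotent of class at most k, i.e., γ_{k+1}(G(S_n)) = 1. -/

import Mathlib

open scoped Classical

/-- The commutator `[x, y] = x⁻¹y⁻¹xy` (the convention used in the paper). -/
def pcomm {G : Type*} [Group G] (x y : G) : G := x⁻¹ * y⁻¹ * x * y

/-- The left-normed commutator word `w_k = [x₁, …, x_k] ∈ F_k`,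
defined inductively by `w₁ = x₁` and `w_{j+1} = [w_j, x_{j+1}]`. -/
def commWord : (k : ℕ) → FreeGroup (Fin k)
  | 0 => 1
  | 1 => FreeGroup.of 0
  | (k + 2) =>
      pcomm (FreeGroup.map Fin.castSucc (commWord (k + 1))) (FreeGroup.of (Fin.last (k + 1)))

/-- The left-normed commutator `[g₁, …, g_k]` of group elements. -/
def commElt {G : Type*} [Group G] : {k : ℕ} → (Fin k → G) → G
  | 0, _ => 1
  | 1, f => f 0
  | (_ + 2), f => pcomm (commElt (fun i => f i.castSucc)) (f (Fin.last _))

/-- The word `[x₁², x₂, …, x_k] ∈ F_k`, defined inductively by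
`u₁ = x₁²` and `u_{j+1} = [u_j, x_{j+1}]`. -/
def sqCommWord : (k : ℕ) → FreeGroup (Fin k)
  | 0 => 1
  | 1 => FreeGroup.of 0 ^ 2
  | (k + 2) =>
      pcomm (FreeGroup.map Fin.castSucc (sqCommWord (k + 1))) (FreeGroup.of (Fin.last (k + 1)))

/-- `P_{G,w}(g) = |w_G⁻¹(g)| / |G|^k`, the probability that the word map of `w`
takes the value `g` on a uniformly random `k`-tuple. -/
noncomputable def wordProb {k : ℕ} {G : Type*} [Group G] (w : FreeGroup (Fin k)) (g : G) : ℝ :=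
  (Nat.card {f : Fin k → G // FreeGroup.lift f w = g} : ℝ) / (Nat.card G : ℝ) ^ k

/-- A group is residually finite if every nontrivial element is excluded by
some normal subgroup of finite index. -/
def ResiduallyFinite (Γ : Type*) [Group Γ] : Prop :=
  ∀ g : Γ, g ≠ 1 → ∃ Δ : Subgroup Γ, Δ.Normal ∧ Δ.FiniteIndex ∧ g ∉ Δ

/-- A word `w ≠ 1` is a probabilistic identity of `Γ` if for some `ε > 0` every
finite quotient `H` of `Γ` satisfies `P_{H,w}(1) ≥ ε`. -/
def IsProbIdentity {k : ℕ} (Γ : Type*) [Group Γ] (w : FreeGroup (Fin k)) : Prop :=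
  w ≠ 1 ∧ ∃ ε : ℝ, 0 < ε ∧
    ∀ (Δ : Subgroup Γ) [Δ.Normal], Δ.FiniteIndex → ε ≤ wordProb w (1 : Γ ⧸ Δ)

/-- `G(H)`: the intersection of the kernels of all homomorphisms from `G` to `H`. -/
def kerInt (G H : Type*) [Group G] [Group H] : Subgroup G := ⨅ φ : G →* H, φ.ker

/-- A word `1 ≠ w ∈ F_k` is good if for every `ε > 0` there is a word `1 ≠ v ∈ F_m`,
depending only on `w` and `ε`, which is an identity of every finite group `G`
satisfying `P_{G,w}(g) ≥ ε` for some `g ∈ G`. -/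
def IsGood {k : ℕ} (w : FreeGroup (Fin k)) : Prop :=
  w ≠ 1 ∧ ∀ ε : ℝ, 0 < ε → ∃ (m : ℕ) (v : FreeGroup (Fin m)), v ≠ 1 ∧
    ∀ (G : Type) [Group G] [Finite G],
      (∃ g : G, ε ≤ wordProb w g) → ∀ f : Fin m → G, FreeGroup.lift f v = 1

/-!
Write `K = G(Sₙ)`. When `[G : H] ≤ n`, the action of `G` on `G/H` factors through `Sₙ` with
kernel inside `H`, so `K` lies in every subgroup of index at most `n`, in particular in every
centralizer of size at least `|G|/n`.

For `w = [u, y]` with `u = [x₁², x₂, …, x_k]`: for a fixed `k`-tuple `x`, the solutions `y` of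
`[u(x), y] = g` form a coset of `C(u(x))`. Hence if `w` takes the value `g` with probability
`ε`, then for a proportion `ε/2` of the tuples `x` the centralizer `C(u(x))` has index at most
`2/ε`, so it contains `K`. The normal closure `N` of these values `u(x)` therefore centralizes
`K`, while `u` is the identity with probability at least `ε/2` in `G/N`. Induction applied to
`G/N` gives `γ_k(K) ≤ N ≤ C(K)`, so `γ_{k+1}(K) = 1`. For `k = 1` the same counting, applied to
the pairs `(x, y)` with `x² = y² = g`, shows that the elements `x⁻¹y`, whose centralizers contain
`K`, are so many that they generate a subgroup containing `K`, so `K` is abelian.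
-/

universe u

open Finset

theorem half_mul_card_le_card_filter_of_le_sum {α : Type*} [Fintype α] {f : α → ℝ} {D ε : ℝ}
    (hD : 0 < D) (hε : 0 ≤ ε) (hf : ∀ a, f a ≤ D) (hsum : ε * D * Fintype.card α ≤ ∑ a, f a) :
    ε / 2 * Fintype.card α ≤ #{a | ε / 2 * D ≤ f a} := by
  set B : Finset α := {a | ε / 2 * D ≤ f a}
  have hlarge : ∑ a ∈ B, f a ≤ #B * D := by
    simpa using Finset.sum_le_card_nsmul B f D fun a _ => hf a
  have hsmall : ∑ a ∈ univ.filter (fun a => ¬ ε / 2 * D ≤ f a), f a ≤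
      Fintype.card α * (ε / 2 * D) :=
    calc _ ≤ #(univ.filter (fun a => ¬ ε / 2 * D ≤ f a)) * (ε / 2 * D) := by
          simpa using Finset.sum_le_card_nsmul _ f _ fun a ha =>
            (not_le.mp (mem_filter.mp ha).2).le
      _ ≤ _ := by gcongr; exact card_le_univ _
  have := Finset.sum_filter_add_sum_filter_not univ (fun a => ε / 2 * D ≤ f a) f
  nlinarith

theorem le_mul_natCeil_div {c ε : ℝ} (hε : 0 < ε) : c ≤ ε * ⌈c / ε⌉₊ := by
  rw [← div_le_iff₀' hε]
  exact Nat.le_ceil _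

section Group

variable {G : Type u} [Group G]

instance kerInt_normal (H : Type*) [Group H] : (kerInt G H).Normal :=
  Subgroup.normal_iInf_normal fun φ => φ.normal_ker

theorem kerInt_perm_le_of_index_le [Finite G] {H : Subgroup G} {n : ℕ} (hn : H.index ≤ n) :
    kerInt G (Equiv.Perm (Fin n)) ≤ H := by
  have : Fintype (G ⧸ H) := Fintype.ofFinite _
  have e : G ⧸ H ↪ Fin n := Function.Embedding.nonempty_of_card_le (by
    rwa [Fintype.card_fin, ← Nat.card_eq_fintype_card, ← Subgroup.index_eq_card]) |>.some
  calc kerInt G (Equiv.Perm (Fin n))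
      ≤ ((Equiv.Perm.viaEmbeddingHom e).comp (MulAction.toPermHom G (G ⧸ H))).ker := iInf_le _ _
    _ = H.normalCore := by
      rw [MonoidHom.ker_comp_of_injective _ _ (Equiv.Perm.viaEmbeddingHom_injective e),
        Subgroup.normalCore_eq_ker]
    _ ≤ H := H.normalCore_le

theorem kerInt_perm_le_of_card_le [Finite G] {H : Subgroup G} {n : ℕ} {δ : ℝ}
    (hH : δ * Nat.card G ≤ Nat.card H) (hn : 1 ≤ δ * n) :
    kerInt G (Equiv.Perm (Fin n)) ≤ H := by
  refine kerInt_perm_le_of_index_le ?_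
  have hG : (0 : ℝ) < Nat.card G := by exact_mod_cast Nat.card_pos
  have hindex : (Nat.card H * H.index : ℝ) = Nat.card G := by
    exact_mod_cast H.card_mul_index
  have : (H.index : ℝ) * δ ≤ 1 := by nlinarith
  have : (H.index : ℝ) ≤ n := by nlinarith
  exact_mod_cast this

theorem map_kerInt_le {Q H H' : Type*} [Group Q] [Group H] [Group H'] (π : G →* Q)
    (ι : H →* H') (hι : Function.Injective ι) : (kerInt G H').map π ≤ kerInt Q H := by
  rintro _ ⟨x, hx, rfl⟩
  refine Subgroup.mem_iInf.mpr fun ψ => ?_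
  rw [← MonoidHom.ker_comp_of_injective ψ ι hι]
  exact iInf_le (fun φ : G →* H' => φ.ker) ((ι.comp ψ).comp π) hx

theorem normalClosure_le_centralizer {K : Subgroup G} [K.Normal] {X : Set G}
    (hX : ∀ x ∈ X, K ≤ Subgroup.centralizer {x}) :
    Subgroup.normalClosure X ≤ Subgroup.centralizer K :=
  Subgroup.normalClosure_le_normal fun x hx _ hk =>
    Subgroup.mem_centralizer_singleton_iff.mp (hX x hx hk)

theorem card_conj_eq_le_card_centralizer [Fintype G] (a b : G) :
    #{y : G | y⁻¹ * a * y = b} ≤ Nat.card (Subgroup.centralizer {a}) := by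
  rcases ({y : G | y⁻¹ * a * y = b} : Finset G).eq_empty_or_nonempty with hempty | ⟨y₀, hy₀⟩
  · simp [hempty]
  · rw [Nat.card_eq_fintype_card, Fintype.card_subtype]
    refine card_le_card_of_injOn (· * y₀⁻¹) (fun y hy => ?_) (mul_left_injective _).injOn
    rw [mem_coe, mem_filter_univ] at hy
    rw [mem_filter_univ] at hy₀
    rw [mem_coe, mem_filter_univ, Subgroup.mem_centralizer_singleton_iff]
    calc y * y₀⁻¹ * a = y * (y₀⁻¹ * a * y₀) * y₀⁻¹ := by group
      _ = a * (y * y₀⁻¹) := by rw [hy₀, ← hy]; group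

theorem exists_finset_kerInt_perm_le_centralizer [Finite G] {α β : Type*} [Fintype β]
    [DecidableEq β] (s : Finset α) (v : α → β) (a : β → G)
    (hfib : ∀ b, #{x ∈ s | v x = b} ≤ Nat.card (Subgroup.centralizer {a b}))
    {ε : ℝ} {n : ℕ} (hn : 2 ≤ ε * n) (hs : ε * Nat.card G * Fintype.card β ≤ #s) :
    ∃ B : Finset β, ε / 2 * Fintype.card β ≤ #B ∧
      ∀ b ∈ B, kerInt G (Equiv.Perm (Fin n)) ≤ Subgroup.centralizer {a b} := by
  have hε : 0 ≤ ε := by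
    by_contra! h
    nlinarith [(n.cast_nonneg : (0 : ℝ) ≤ n)]
  have hsum : ε * Nat.card G * Fintype.card β ≤
      ∑ b, (Nat.card (Subgroup.centralizer {a b}) : ℝ) :=
    calc _ ≤ (#s : ℝ) := hs
      _ = ∑ b, (#{x ∈ s | v x = b} : ℝ) := by
        exact_mod_cast card_eq_sum_card_fiberwise fun x _ => mem_univ (v x)
      _ ≤ _ := by gcongr with b; exact hfib b
  refine ⟨_, half_mul_card_le_card_filter_of_le_sum (by exact_mod_cast Nat.card_pos) hε
    (fun b => by exact_mod_cast Subgroup.card_le_card_group _) hsum, fun b hb => ?_⟩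
  rw [mem_filter_univ] at hb
  exact kerInt_perm_le_of_card_le hb (by linarith)

theorem lift_apply_map {α β : Type*} (f : β → G) (g : α → β) (w : FreeGroup α) :
    FreeGroup.lift f (FreeGroup.map g w) = FreeGroup.lift (f ∘ g) w :=
  FreeGroup.lift_unique ((FreeGroup.lift f).comp (FreeGroup.map g)) (by simp)

theorem lift_sqCommWord_one (f : Fin 1 → G) : FreeGroup.lift f (sqCommWord 1) = f 0 ^ 2 := by
  simp [sqCommWord]

theorem lift_sqCommWord_add_two {m : ℕ} (f : Fin (m + 2) → G) :
    FreeGroup.lift f (sqCommWord (m + 2)) =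
      pcomm (FreeGroup.lift (Fin.init f) (sqCommWord (m + 1))) (f (Fin.last _)) := by
  simp only [sqCommWord, pcomm, map_mul, map_inv, FreeGroup.lift_apply_of, lift_apply_map]
  rfl

theorem conj_eq_mul_of_pcomm_eq {a y g : G} (h : pcomm a y = g) : y⁻¹ * a * y = a * g := by
  rw [← h, pcomm]
  group

theorem inv_mul_mul_eq_inv_of_mul_sq_eq_sq {x b : G} (h : (x * b) ^ 2 = x ^ 2) :
    x⁻¹ * b * x = b⁻¹ := by
  have hbxb : x * (b * x * b) = x * x := by simpa [sq, mul_assoc] using h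
  calc x⁻¹ * b * x = x⁻¹ * (b * x * b) * b⁻¹ := by group
    _ = b⁻¹ := by rw [mul_left_cancel hbxb]; group

theorem card_div_le_wordProb_quotient [Finite G] {k : ℕ} (w : FreeGroup (Fin k))
    (N : Subgroup G) [N.Normal] (B : Finset (Fin k → G))
    (hB : ∀ x ∈ B, FreeGroup.lift x w ∈ N) :
    (#B : ℝ) / Nat.card G ^ k ≤ wordProb w (1 : G ⧸ N) := by
  have : Fintype (G ⧸ N) := Fintype.ofFinite _
  have : Fintype N := Fintype.ofFinite _
  let e := Subgroup.groupEquivQuotientProdSubgroup (s := N)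
  set S : Finset (Fin k → G ⧸ N) := {q | FreeGroup.lift q w = 1}
  have hcard : #B ≤ #S * Nat.card N ^ k := by
    have : #S * Nat.card N ^ k = #(S ×ˢ (univ : Finset (Fin k → N))) := by
      simp [card_product, Nat.card_eq_fintype_card]
    rw [this]
    refine card_le_card_of_injOn (fun x => (fun i => (e (x i)).1, fun i => (e (x i)).2))
      (fun x hx => ?_) fun x _ y _ hxy => ?_
    · have hmk : FreeGroup.lift (fun i => (x i : G ⧸ N)) w =
          QuotientGroup.mk' N (FreeGroup.lift x w) :=
        (FreeGroup.lift_unique ((QuotientGroup.mk' N).comp (FreeGroup.lift x)) (by simp)).symm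
      rw [coe_product, Set.mem_prod, mem_coe, mem_filter_univ]
      exact ⟨hmk.trans ((QuotientGroup.eq_one_iff _).mpr (hB x hx)), mem_coe.mpr (mem_univ _)⟩
    · funext i
      exact e.injective (Prod.ext (congrFun (Prod.ext_iff.mp hxy).1 i)
        (congrFun (Prod.ext_iff.mp hxy).2 i))
  have hG : (Nat.card G : ℝ) = Nat.card (G ⧸ N) * Nat.card N := by
    exact_mod_cast Subgroup.card_eq_card_quotient_mul_card_subgroup N
  have hQ : (0 : ℝ) < Nat.card (G ⧸ N) := by exact_mod_cast Nat.card_pos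
  have hN : (0 : ℝ) < Nat.card N := by exact_mod_cast Nat.card_pos
  have hS : Nat.card {q : Fin k → G ⧸ N // FreeGroup.lift q w = 1} = #S := by
    rw [Nat.card_eq_fintype_card, Fintype.card_subtype]
  rw [wordProb, hS, hG, mul_pow, div_le_div_iff₀ (by positivity) (by positivity)]
  calc (#B : ℝ) * Nat.card (G ⧸ N) ^ k ≤ #S * Nat.card N ^ k * Nat.card (G ⧸ N) ^ k := by
        gcongr; exact_mod_cast hcard
    _ = _ := by ring

theorem lowerCentralSeries_kerInt_perm_one_eq_bot [Fintype G] {ε : ℝ} (hε : 0 < ε) {n : ℕ}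
    (hn : 2 ≤ ε ^ 2 * n) {g : G} (hg : ε ≤ wordProb (sqCommWord 1) g) :
    (kerInt G (Equiv.Perm (Fin n))).lowerCentralSeries 1 = ⊥ := by
  set K := kerInt G (Equiv.Perm (Fin n))
  set T : Finset G := {x | x ^ 2 = g}
  have hT : ε * Nat.card G ≤ #T := by
    have hcard : Nat.card {f : Fin 1 → G // FreeGroup.lift f (sqCommWord 1) = g} = #T := by
      rw [← Fintype.card_subtype, ← Nat.card_eq_fintype_card]
      exact Nat.card_congr (Equiv.subtypeEquiv (Equiv.funUnique (Fin 1) G)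
        fun f => by rw [lift_sqCommWord_one]; rfl)
    rwa [wordProb, hcard, pow_one, le_div_iff₀ (by exact_mod_cast Nat.card_pos)] at hg
  have hfib : ∀ b : G, #{p ∈ T ×ˢ T | p.1⁻¹ * p.2 = b} ≤
      Nat.card (Subgroup.centralizer {b}) := by
    intro b
    -- `y = x b` and `(x b)² = x²` force `x⁻¹ b x = b⁻¹`, so `x` ranges over a coset of `C(b)`
    have hmem : ∀ p ∈ ({p ∈ T ×ˢ T | p.1⁻¹ * p.2 = b} : Finset (G × G)),
        p.2 = p.1 * b ∧ (p.1 * b) ^ 2 = p.1 ^ 2 := by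
      rintro ⟨x, y⟩ hp
      simp only [mem_filter, mem_product, T, mem_univ, true_and, inv_mul_eq_iff_eq_mul] at hp
      obtain ⟨⟨hx, hy⟩, rfl⟩ := hp
      exact ⟨rfl, hy.trans hx.symm⟩
    refine le_trans (card_le_card_of_injOn Prod.fst (t := {x | x⁻¹ * b * x = b⁻¹})
      (fun p hp => ?_) fun p hp q hq hpq => ?_) (card_conj_eq_le_card_centralizer b b⁻¹)
    · simpa using inv_mul_mul_eq_inv_of_mul_sq_eq_sq (hmem p hp).2
    · exact Prod.ext hpq (by rw [(hmem p hp).1, (hmem q hq).1, hpq])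
  obtain ⟨B, hB, hBK⟩ := exists_finset_kerInt_perm_le_centralizer (T ×ˢ T)
    (fun p => p.1⁻¹ * p.2) id hfib hn (by
      rw [card_product, Nat.cast_mul, Fintype.card_eq_nat_card]
      nlinarith [mul_nonneg hε.le (Nat.cast_nonneg (α := ℝ) (Nat.card G))])
  have hKN : K ≤ Subgroup.normalClosure B := by
    refine kerInt_perm_le_of_card_le (δ := ε ^ 2 / 2) ?_ (by linarith)
    calc ε ^ 2 / 2 * Nat.card G ≤ #B := by rwa [Fintype.card_eq_nat_card] at hB
      _ ≤ Nat.card (Subgroup.normalClosure (B : Set G)) := by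
        rw [← Set.ncard_coe_finset, ← Nat.card_coe_set_eq]
        exact_mod_cast Nat.card_mono (Set.toFinite _) Subgroup.subset_normalClosure
  exact Subgroup.commutator_eq_bot_iff_le_centralizer.mpr
    (hKN.trans (normalClosure_le_centralizer fun b hb => hBK b hb))

theorem lowerCentralSeries_kerInt_perm_add_two_eq_bot [Fintype G]
    {m n' n : ℕ} {ε : ℝ}
    (ih : ∀ (Q : Type u) [Group Q] [Finite Q], ε / 2 ≤ wordProb (sqCommWord (m + 1)) (1 : Q) →
      (kerInt Q (Equiv.Perm (Fin n'))).lowerCentralSeries (m + 1) = ⊥)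
    (hn' : n' ≤ n) (hn : 2 ≤ ε * n) {g : G} (hg : ε ≤ wordProb (sqCommWord (m + 2)) g) :
    (kerInt G (Equiv.Perm (Fin n))).lowerCentralSeries (m + 2) = ⊥ := by
  set K := kerInt G (Equiv.Perm (Fin n))
  set u : (Fin (m + 1) → G) → G := fun x => FreeGroup.lift x (sqCommWord (m + 1))
  set S : Finset (Fin (m + 2) → G) := {f | FreeGroup.lift f (sqCommWord (m + 2)) = g}
  have hG : (0 : ℝ) < Nat.card G := by exact_mod_cast Nat.card_pos
  have htuples : (Fintype.card (Fin (m + 1) → G) : ℝ) = Nat.card G ^ (m + 1) := by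
    rw [Fintype.card_fun, Fintype.card_fin, Nat.card_eq_fintype_card, Nat.cast_pow]
  have hS : ε * Nat.card G * Fintype.card (Fin (m + 1) → G) ≤ #S := by
    have hcard : Nat.card {f : Fin (m + 2) → G // FreeGroup.lift f (sqCommWord (m + 2)) = g} =
        #S := by
      rw [Nat.card_eq_fintype_card, Fintype.card_subtype]
    rw [wordProb, hcard, le_div_iff₀ (by positivity)] at hg
    calc ε * Nat.card G * Fintype.card (Fin (m + 1) → G) = ε * Nat.card G ^ (m + 2) := by
          rw [htuples]; ring
      _ ≤ #S := hg
  have hfib : ∀ x, #{f ∈ S | Fin.init f = x} ≤ Nat.card (Subgroup.centralizer {u x}) := by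
    intro x
    refine le_trans (card_le_card_of_injOn (· (Fin.last _)) (t := {y | y⁻¹ * u x * y = u x * g})
      (fun f hf => ?_) fun f hf f' hf' hff' => ?_) (card_conj_eq_le_card_centralizer _ _)
    · simp only [coe_filter, S, mem_filter_univ] at hf
      obtain ⟨hfg, rfl⟩ := hf
      rw [lift_sqCommWord_add_two] at hfg
      simpa using conj_eq_mul_of_pcomm_eq hfg
    · simp only [coe_filter] at hf hf'
      rw [← Fin.snoc_init_self f, ← Fin.snoc_init_self f', hf.2, hf'.2]
      exact congrArg _ hff'
  obtain ⟨B, hB, hBK⟩ := exists_finset_kerInt_perm_le_centralizer S Fin.init u hfib hn hS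
  set N := Subgroup.normalClosure (u '' B)
  have hNK : N ≤ Subgroup.centralizer K :=
    normalClosure_le_centralizer (by rintro _ ⟨x, hx, rfl⟩; exact hBK x hx)
  have hQ : ε / 2 ≤ wordProb (sqCommWord (m + 1)) (1 : G ⧸ N) := by
    refine le_trans ?_ (card_div_le_wordProb_quotient _ N B
      fun x hx => Subgroup.subset_normalClosure ⟨x, hx, rfl⟩)
    rw [le_div_iff₀ (by positivity)]
    rwa [← htuples]
  have hKN : K.lowerCentralSeries (m + 1) ≤ N := by
    rw [← QuotientGroup.ker_mk' N, ← Subgroup.map_eq_bot_iff, eq_bot_iff,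
      Subgroup.map_lowerCentralSeries, ← ih _ hQ]
    exact Subgroup.lowerCentralSeries_mono _ (map_kerInt_le _ _
      (Equiv.Perm.viaEmbeddingHom_injective (Fin.castLEEmb hn')))
  exact Subgroup.commutator_eq_bot_iff_le_centralizer.mpr (hKN.trans hNK)

end Group

theorem exists_kerInt_perm_lowerCentralSeries_eq_bot (m : ℕ) {ε : ℝ} (hε : 0 < ε) :
    ∃ n : ℕ, 0 < n ∧ ∀ (G : Type u) [Group G] [Finite G] (g : G),
      ε ≤ wordProb (sqCommWord (m + 1)) g →
        (kerInt G (Equiv.Perm (Fin n))).lowerCentralSeries (m + 1) = ⊥ := by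
  induction m generalizing ε with
  | zero =>
    refine ⟨⌈2 / ε ^ 2⌉₊, Nat.ceil_pos.mpr (by positivity), fun G _ _ g hg => ?_⟩
    have := Fintype.ofFinite G
    exact lowerCentralSeries_kerInt_perm_one_eq_bot hε (le_mul_natCeil_div (by positivity)) hg
  | succ m ih =>
    obtain ⟨n', hn', hG'⟩ := ih (half_pos hε)
    refine ⟨max n' ⌈2 / ε⌉₊, lt_max_of_lt_left hn', fun G _ _ g hg => ?_⟩
    have := Fintype.ofFinite G
    refine lowerCentralSeries_kerInt_perm_add_two_eq_bot (fun Q _ _ => hG' Q 1)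
      (le_max_left _ _) ?_ hg
    exact (le_mul_natCeil_div hε).trans (by gcongr; exact le_max_right _ _)

/-- For `w = [x₁², x₂, …, x_k]` there is an `n = n(k, ε)` such that
for every finite group `G` with `P_{G,w}(g) ≥ ε` for some `g`, the subgroup
`G(S_n)` is nilpotent of class at most `k`, i.e. `γ_{k+1}(G(S_n)) = 1`. -/
theorem stmt10 (k : ℕ) (hk : 1 ≤ k) (ε : ℝ) (hε : 0 < ε) :
    ∃ n : ℕ, 0 < n ∧ ∀ (G : Type) [Group G] [Finite G] (g : G),
      ε ≤ wordProb (sqCommWord k) g →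
        (⊤ : Subgroup ↥(kerInt G (Equiv.Perm (Fin n)))).lowerCentralSeries k = ⊥ := by
  obtain ⟨m, rfl⟩ := Nat.exists_eq_add_of_le' hk
  obtain ⟨n, hn, hG⟩ := exists_kerInt_perm_lowerCentralSeries_eq_bot m hε
  refine ⟨n, hn, fun G _ _ g hg => ?_⟩
  refine (Subgroup.map_eq_bot_iff_of_injective _ (Subgroup.subtype_injective _)).mp ?_
  rw [Subgroup.top_subtype_lowerCentralSeries]
  exact hG G g hg
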